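/- Let d ≥ 1, let c ∈ ℤ^d with c ≠ 0, let Λ be a real number with Λ ≥ 3, and suppose (a,b) ∈ D_Λ^+(c). Let ã, b̃ ∈ ℤ^d and set Ω = Λ − max(|ã − a|, |b̃ − b|) − 2. If Ω ≥ 3, then (ã, b̃) ∈ D_Ω^+(c). -/

import Mathlib

/-- The lattice point `a ∈ ℤ^d` viewed as a vector in Euclidean space `ℝ^d`. -/
noncomputable def latt {d : ℕ} (a : Fin d → ℤ) : EuclideanSpace ℝ (Fin d) :=
  WithLp.toLp 2 (fun i => (a i : ℝ))

/-- The Lipschitz domain `D_Λ^+(c)`: the pair `(a, b)` belongs to it iff there are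
`a', b' ∈ ℤ^d` and a real `t ≥ 0` with `a = a' + tc`, `b = b' + tc`,
`|a| ≥ Λ(|a'| + |c|)|c|`, `|b| ≥ Λ(|b'| + |c|)|c|`, and
`|a|/|c| ≥ 2Λ²`, `|b|/|c| ≥ 2Λ²`. -/
def LipDom {d : ℕ} (Λ : ℝ) (c a b : Fin d → ℤ) : Prop :=
  ∃ (a' b' : Fin d → ℤ) (t : ℝ), 0 ≤ t ∧
    latt a = latt a' + t • latt c ∧
    latt b = latt b' + t • latt c ∧
    Λ * (‖latt a'‖ + ‖latt c‖) * ‖latt c‖ ≤ ‖latt a‖ ∧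
    Λ * (‖latt b'‖ + ‖latt c‖) * ‖latt c‖ ≤ ‖latt b‖ ∧
    2 * Λ ^ 2 ≤ ‖latt a‖ / ‖latt c‖ ∧
    2 * Λ ^ 2 ≤ ‖latt b‖ / ‖latt c‖

/-!
Write `a = a' + t c` as in the definition of `D_Λ^+(c)` and put `M = max(|ã − a|, |b̃ − b|)`.
The same `t` works for `ã` with `ã' = a' + (ã − a)`, since `|ã'| ≤ |a'| + M` and `|ã| ≥ |a| − M`.
The loss is absorbed by splitting `Λ = Ω + (M + 2)` and using the convex combination
`Λ|a| = Ω|a| + (M + 2)|a| ≥ ΩΛ(|a'| + |c|)|c| + 2(M + 2)Λ²|c|`; the second term pays for the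
error `ΩM|c| + M` because `|c| ≥ 1` for a nonzero lattice vector.
-/

def LipDomSide {d : ℕ} (Λ : ℝ) (c : Fin d → ℤ) (t : ℝ) (a : Fin d → ℤ) : Prop :=
  ∃ a' : Fin d → ℤ, latt a = latt a' + t • latt c ∧
    Λ * (‖latt a'‖ + ‖latt c‖) * ‖latt c‖ ≤ ‖latt a‖ ∧
    2 * Λ ^ 2 ≤ ‖latt a‖ / ‖latt c‖

lemma lipDom_iff {d : ℕ} (Λ : ℝ) (c a b : Fin d → ℤ) :
    LipDom Λ c a b ↔ ∃ t, 0 ≤ t ∧ LipDomSide Λ c t a ∧ LipDomSide Λ c t b := by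
  constructor
  · rintro ⟨a', b', t, ht, ha, hb, ha₁, hb₁, ha₂, hb₂⟩
    exact ⟨t, ht, ⟨a', ha, ha₁, ha₂⟩, ⟨b', hb, hb₁, hb₂⟩⟩
  · rintro ⟨t, ht, ⟨a', ha, ha₁, ha₂⟩, ⟨b', hb, hb₁, hb₂⟩⟩
    exact ⟨a', b', t, ht, ha, hb, ha₁, hb₁, ha₂, hb₂⟩

@[simp]
lemma latt_add {d : ℕ} (x y : Fin d → ℤ) : latt (x + y) = latt x + latt y := by
  ext i
  simp [latt]

@[simp]
lemma latt_sub {d : ℕ} (x y : Fin d → ℤ) : latt (x - y) = latt x - latt y := by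
  ext i
  simp [latt]

lemma one_le_norm_latt {d : ℕ} {c : Fin d → ℤ} (hc : c ≠ 0) : 1 ≤ ‖latt c‖ := by
  obtain ⟨i, hi⟩ := Function.ne_iff.mp hc
  calc (1 : ℝ) ≤ |(c i : ℝ)| := by exact_mod_cast Int.one_le_abs hi
    _ = ‖latt c i‖ := by simp [latt]
    _ ≤ ‖latt c‖ := PiLp.norm_apply_le _ i

lemma lipschitz_bound_of_split {Ω M C A A' : ℝ} (hΩ : 1 ≤ Ω) (hM : 0 ≤ M) (hC : 1 ≤ C)
    (h₁ : (Ω + M + 2) * (A' + C) * C ≤ A) (h₂ : 2 * (Ω + M + 2) ^ 2 * C ≤ A) :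
    Ω * (A' + M + C) * C ≤ A - M := by
  set Λ := Ω + M + 2
  have hΛ : 0 < Λ := by positivity
  have herror : Ω * M * C + M ≤ 2 * (M + 2) * Λ * C := by
    have hM_le : M ≤ M * (Ω * C) :=
      le_mul_of_one_le_right hM (one_le_mul_of_one_le_of_one_le hΩ hC)
    nlinarith [mul_nonneg (mul_nonneg hM (by positivity : 0 ≤ Ω)) (by positivity : 0 ≤ C)]
  refine le_of_mul_le_mul_left ?_ hΛ
  nlinarith [mul_le_mul_of_nonneg_left h₁ (by positivity : 0 ≤ Ω),
    mul_le_mul_of_nonneg_left h₂ (by positivity : 0 ≤ M + 2),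
    mul_le_mul_of_nonneg_left herror hΛ.le]

lemma ratio_bound_of_split {Ω M C A : ℝ} (hΩ : 0 ≤ Ω) (hM : 0 ≤ M) (hC : 1 ≤ C)
    (h : 2 * (Ω + M + 2) ^ 2 * C ≤ A) : 2 * Ω ^ 2 * C ≤ A - M := by
  nlinarith [mul_le_mul_of_nonneg_left hC (by positivity : 0 ≤ (M + 2) * (2 * Ω + M + 2))]

lemma LipDomSide.perturb {d : ℕ} {Λ M t : ℝ} {c a ã : Fin d → ℤ} (hc : c ≠ 0)
    (h : LipDomSide Λ c t a) (hM : ‖latt (ã - a)‖ ≤ M) (hΩ : 1 ≤ Λ - M - 2) :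
    LipDomSide (Λ - M - 2) c t ã := by
  obtain ⟨a', hdecomp, h₁, h₂⟩ := h
  set Ω := Λ - M - 2
  have hC : 1 ≤ ‖latt c‖ := one_le_norm_latt hc
  have hC₀ : 0 < ‖latt c‖ := one_pos.trans_le hC
  have hM₀ : 0 ≤ M := (norm_nonneg _).trans hM
  have hΛ : Λ = Ω + M + 2 := by ring
  rw [hΛ] at h₁ h₂
  rw [le_div_iff₀ hC₀] at h₂
  have hã : ‖latt a‖ - M ≤ ‖latt ã‖ := by
    have := norm_sub_norm_le (latt a) (latt ã)
    rw [norm_sub_rev, ← latt_sub] at this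
    linarith
  have hã' : ‖latt (a' + (ã - a))‖ ≤ ‖latt a'‖ + M := by
    rw [latt_add]
    exact norm_add_le_of_le le_rfl hM
  refine ⟨a' + (ã - a), ?_, ?_, ?_⟩
  · rw [latt_add, latt_sub, hdecomp]
    abel
  · calc Ω * (‖latt (a' + (ã - a))‖ + ‖latt c‖) * ‖latt c‖
        ≤ Ω * (‖latt a'‖ + M + ‖latt c‖) * ‖latt c‖ := by gcongr
      _ ≤ ‖latt a‖ - M := lipschitz_bound_of_split hΩ hM₀ hC h₁ h₂
      _ ≤ ‖latt ã‖ := hã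
  · rw [le_div_iff₀ hC₀]
    exact (ratio_bound_of_split (by linarith) hM₀ hC h₂).trans hã

theorem stmt_6_general {d : ℕ} (c : Fin d → ℤ) (hc : c ≠ 0)
    (Λ : ℝ) (a b : Fin d → ℤ) (hab : LipDom Λ c a b)
    (atil btil : Fin d → ℤ) (Ω : ℝ)
    (hΩdef : Ω = Λ - max ‖latt (atil - a)‖ ‖latt (btil - b)‖ - 2)
    (hΩ : 3 ≤ Ω) :
    LipDom Ω c atil btil := by
  obtain ⟨t, ht, ha, hb⟩ := (lipDom_iff Λ c a b).mp hab
  rw [hΩdef] at hΩ ⊢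
  exact (lipDom_iff _ c atil btil).mpr ⟨t, ht,
    ha.perturb hc (le_max_left _ _) (by linarith),
    hb.perturb hc (le_max_right _ _) (by linarith)⟩

/-- Corollary 2.2(iii): if `(a,b) ∈ D_Λ^+(c)` with `Λ ≥ 3`, and
`Ω = Λ − max(|ã−a|, |b̃−b|) − 2 ≥ 3`, then `(ã, b̃) ∈ D_Ω^+(c)`. -/
theorem stmt_6 {d : ℕ} (hd : 1 ≤ d) (c : Fin d → ℤ) (hc : c ≠ 0)
    (Λ : ℝ) (hΛ : 3 ≤ Λ) (a b : Fin d → ℤ) (hab : LipDom Λ c a b)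
    (atil btil : Fin d → ℤ) (Ω : ℝ)
    (hΩdef : Ω = Λ - max ‖latt (atil - a)‖ ‖latt (btil - b)‖ - 2)
    (hΩ : 3 ≤ Ω) :
    LipDom Ω c atil btil :=
  stmt_6_general c hc Λ a b hab atil btil Ω hΩdef hΩ
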